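/- arXiv:1605.03143 — 2 statements merged into one kernel-verified Lean document; each statement's English description precedes it below -/
import Mathlib

section
/- In the two-utility-function example, the unconstrained VRL agent prefers wireheading: with states s = (š_i, d) for š ∈ {š₁, š₂} and delusion functions d : {−1,0,1} → {−1,0,1}, utility functions u₁(š₁)=0, u₁(š₂)=−1, u₂(š₁)=0, u₂(š₂)=1, prior C(u₁)=2/3, C(u₂)=1/3, and deterministic transitions B((š_i,d) | â_i d) = 1 with B(r | (š,d)) = Σ_j C(u_j)·[d(u_j(š)) = r], the posterior satisfies C(u₂ | (š₂,d), r=1) = 1 when d(1)=1 and d(−1)≠1, the VRL value of the wireheading action â₂ d¹ (where d¹ is the constant-1 delusion) is V(â₂ d¹) = 1, while V(â₁ d) = 0 for any delusion d; hence V(â₂ d¹) > V(â₁ d). -/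
/-- In the two-utility-function example, the unconstrained VRL
agent prefers the wireheading action â₂d¹ to any honest action â₁d.
Inner states: `false` = si₁ (neutral), `true` = si₂ (agent loses).
A state is a pair (si, d) of an inner state and a delusion d : ℝ → ℝ;
action âᵢd deterministically leads to state (siᵢ, d). -/
theorem u_vrl_wireheads_example
    (u1 u2 : Bool → ℝ)
    (hu1₁ : u1 false = 0) (hu1₂ : u1 true = -1)
    (hu2₁ : u2 false = 0) (hu2₂ : u2 true = 1)
    (C1 C2 : ℝ) (hC1 : C1 = 2/3) (hC2 : C2 = 1/3)
    (B : Bool → (ℝ → ℝ) → ℝ → ℝ)  -- B(r | (si,d)): predicted observed reward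
    (hB : ∀ si d r, B si d r
      = C1 * (if d (u1 si) = r then 1 else 0) + C2 * (if d (u2 si) = r then 1 else 0))
    (P1 P2 : Bool → ℝ → ℝ)         -- posteriors C(uᵢ | si, r) ∝ C(uᵢ)·[uᵢ(si) = r]
    (hP1 : ∀ si r, P1 si r
      = C1 * (if u1 si = r then 1 else 0)
        / (C1 * (if u1 si = r then 1 else 0) + C2 * (if u2 si = r then 1 else 0)))
    (hP2 : ∀ si r, P2 si r
      = C2 * (if u2 si = r then 1 else 0)
        / (C1 * (if u1 si = r then 1 else 0) + C2 * (if u2 si = r then 1 else 0)))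
    (V : Bool → (ℝ → ℝ) → ℝ)       -- VRL value of action â(si)d
    (hV : ∀ si d, V si d
      = ∑ r ∈ ({-1, 0, 1} : Finset ℝ), B si d r * (P1 si r * u1 si + P2 si r * u2 si)) :
    (∀ d : ℝ → ℝ, d 1 = 1 → d (-1) ≠ 1 → P2 true 1 = 1) ∧
    V true (fun _ => 1) = 1 ∧
    (∀ d : ℝ → ℝ, V false d = 0) ∧
    (∀ d : ℝ → ℝ, V true (fun _ => 1) > V false d) := by
  have hP2t : P2 true 1 = 1 := by
    rw [hP2, hu1₂, hu2₂, hC1, hC2]; norm_num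
  have hVt : V true (fun _ => 1) = 1 := by
    rw [hV]
    rw [Finset.sum_insert (by norm_num), Finset.sum_insert (by norm_num),
      Finset.sum_singleton]
    rw [hB, hB, hB, hP1, hP1, hP1, hP2, hP2, hP2, hu1₂, hu2₂, hC1, hC2]
    norm_num
  have hVf : ∀ d : ℝ → ℝ, V false d = 0 := by
    intro d
    rw [hV]
    refine Finset.sum_eq_zero fun r _ => ?_
    rw [hP1, hP2, hu1₁, hu2₁]
    ring
  refine ⟨fun d _ _ => hP2t, hVt, hVf, fun d => ?_⟩
  rw [hVt, hVf d]; norm_num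
end

section
/- Suppose for an action a there exists a single state s₀ with B(s₀|a) = 1, and suppose a is expected-ethics preserving at s₀: C(u) = Σ_r B(r|s₀)·C(u|s₀,r) for all u, with posteriors well-defined. Then the VRL value satisfies V(a) = Σ_u C(u)·u(s₀), i.e., the value of a deterministic EEP action is the prior-expected utility of the resulting state. -/
/-- The VRL value of a deterministic expected-ethics-preserving
action is the prior-expected utility of the resulting state. -/
theorem deterministic_eep_value
    {S U R A : Type} [Fintype S] [Fintype U] [Fintype R] [DecidableEq R]
    (B : A → S → ℝ)                -- B(s|a)
    (Br : S → R → ℝ)               -- B(r|s)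
    (C : U → ℝ)                    -- prior C(u)
    (util : U → S → R)             -- u(s)
    (val : R → ℝ)                  -- real value of a reward
    (Cr : S → R → ℝ)
    (hCr : ∀ s r, Cr s r = ∑ u, C u * (if util u s = r then 1 else 0))
    (Cpost : U → S → R → ℝ)
    (hCpost : ∀ u s r, Cpost u s r = C u * (if util u s = r then 1 else 0) / Cr s r)
    (a : A) (s₀ : S)
    (hdet₁ : B a s₀ = 1) (hdet₂ : ∀ s, s ≠ s₀ → B a s = 0)
    (hpos : ∀ r, Br s₀ r > 0 → Cr s₀ r > 0)
    (hEEP : ∀ u, C u = ∑ r, Br s₀ r * Cpost u s₀ r) :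
    (∑ s, ∑ r, ∑ u, B a s * Br s r * Cpost u s r * val (util u s))
      = ∑ u, C u * val (util u s₀) := by
  rw [Finset.sum_eq_single s₀ (fun s _ hs => by
    simp [hdet₂ s hs]) (fun h => absurd (Finset.mem_univ s₀) h)]
  rw [Finset.sum_comm]
  refine Finset.sum_congr rfl fun u _ => ?_
  have key : ∀ r, Br s₀ r * Cpost u s₀ r * val (util u s₀)
      = Br s₀ r * Cpost u s₀ r * val (util u s₀) := fun r => rfl
  calc ∑ r, B a s₀ * Br s₀ r * Cpost u s₀ r * val (util u s₀)
      = (∑ r, Br s₀ r * Cpost u s₀ r) * val (util u s₀) := by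
        rw [Finset.sum_mul]; exact Finset.sum_congr rfl fun r _ => by rw [hdet₁]; ring
    _ = C u * val (util u s₀) := by rw [← hEEP u]
end
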